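/- Let G(x,ς) := (1/(ς√(2π))) exp{x − d₊(x,ς)²/2} with d₊(x,ς) = x/ς + ς/2. Then for every n ∈ ℕ there exists a constant Cₙ > 0, independent of x and ς, such that |∂ₓⁿG(x,ς)| ≤ Cₙ/ς^{n+1} for all x ∈ ℝ and ς > 0. -/

import Mathlib

/-- `G(x,ς) = exp{x − d₊(x,ς)²/2}/(ς√(2π))` with `d₊(x,ς) = x/ς + ς/2`. -/
noncomputable def GATM (ς x : ℝ) : ℝ :=
  Real.exp (x - (x/ς + ς/2)^2/2) / (ς * Real.sqrt (2*Real.pi))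

/-!
Completing the square, `G(x,ς) = φ(x/ς − ς/2)/(ς√(2π))` with `φ(y) = exp(−y²/2)`, so by the chain
rule `∂ₓⁿG(x,ς) = φ⁽ⁿ⁾(x/ς − ς/2)/(ςⁿ⁺¹√(2π))`. Since `φ⁽ⁿ⁾ = ±Hₙ φ` for the Hermite polynomial `Hₙ`,
it is continuous and vanishes at `±∞`, hence bounded, which gives the constant `Cₙ`.
-/

open Real Filter Topology Polynomial Bornology Set

namespace Polynomial

lemma tendsto_eval_mul_exp_neg_sq_half_atTop (P : ℝ[X]) :
    Tendsto (fun y => P.eval y * exp (-(y ^ 2 / 2))) atTop (𝓝 0) := by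
  -- for `y ≥ 2`, `exp (-(y ^ 2 / 2)) ≤ exp (-y)`, and `P` is `o(exp)`
  refine squeeze_zero_norm' ?_ (by simpa using P.tendsto_div_exp_atTop.norm)
  filter_upwards [eventually_ge_atTop 2] with y hy
  rw [norm_mul, norm_eq_abs, norm_of_nonneg (exp_pos _).le, div_eq_mul_inv |P.eval y|, ← exp_neg]
  gcongr
  nlinarith

lemma isBounded_range_eval_mul_exp_neg_sq_half (P : ℝ[X]) :
    IsBounded (range fun y => P.eval y * exp (-(y ^ 2 / 2))) := by
  rw [(by fun_prop : Continuous fun y => P.eval y * exp (-(y ^ 2 / 2))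
    ).isBounded_range_iff_isBigO_atTop_atBot]
  refine ⟨(tendsto_eval_mul_exp_neg_sq_half_atTop P).isBigO_one ℝ, Tendsto.isBigO_one ℝ (c := 0) ?_⟩
  simpa [Function.comp_def] using
    (tendsto_eval_mul_exp_neg_sq_half_atTop (P.comp (-X))).comp tendsto_neg_atBot_atTop

end Polynomial

lemma iteratedDeriv_exp_neg_sq_half (n : ℕ) :
    iteratedDeriv n (fun y => exp (-(y ^ 2 / 2))) =
      fun y => ((-1) ^ n * (hermite n).map (Int.castRingHom ℝ)).eval y * exp (-(y ^ 2 / 2)) := by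
  ext y
  rw [iteratedDeriv_eq_iterate, deriv_gaussian_eq_hermite_mul_gaussian, aeval_def,
    eval₂_eq_eval_map, eval_mul]
  simp

lemma exists_pos_abs_iteratedDeriv_exp_neg_sq_half_le (n : ℕ) :
    ∃ C > 0, ∀ y, |iteratedDeriv n (fun y => exp (-(y ^ 2 / 2))) y| ≤ C := by
  obtain ⟨C, hC, hbound⟩ := (isBounded_range_eval_mul_exp_neg_sq_half _).exists_pos_norm_le
  exact ⟨C, hC, fun y => by rw [iteratedDeriv_exp_neg_sq_half]; exact hbound _ (mem_range_self y)⟩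

lemma iteratedDeriv_comp_mul_sub_const {𝕜 : Type*} [NontriviallyNormedField 𝕜] {n : ℕ}
    {f : 𝕜 → 𝕜} (hf : ContDiff 𝕜 n f) (a b x : 𝕜) :
    iteratedDeriv n (fun x => f (a * x - b)) x = a ^ n * iteratedDeriv n f (a * x - b) := by
  rw [iteratedDeriv_comp_const_mul (f := fun y => f (y - b))
    (hf.comp (contDiff_id.sub contDiff_const)), iteratedDeriv_comp_sub_const]

lemma GATM_eq_inv_mul_exp_neg_sq_half {ς : ℝ} (hς : ς ≠ 0) (x : ℝ) :
    GATM ς x = (ς * √(2 * π))⁻¹ * exp (-((ς⁻¹ * x - ς / 2) ^ 2 / 2)) := by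
  rw [GATM, div_eq_inv_mul, exp_eq_exp.mpr]
  field_simp
  ring

theorem stmt_9 (n : ℕ) :
    ∃ C : ℝ, 0 < C ∧ ∀ ς x : ℝ, 0 < ς →
      |iteratedDeriv n (fun x' => GATM ς x') x| ≤ C / ς^(n+1) := by
  obtain ⟨C, hC, hbound⟩ := exists_pos_abs_iteratedDeriv_exp_neg_sq_half_le n
  refine ⟨C / √(2 * π), by positivity, fun ς x hς => ?_⟩
  simp_rw [GATM_eq_inv_mul_exp_neg_sq_half hς.ne']
  rw [iteratedDeriv_const_mul_field,
    iteratedDeriv_comp_mul_sub_const (f := fun y => exp (-(y ^ 2 / 2))) (by fun_prop),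
    abs_mul, abs_mul, abs_of_pos (by positivity), abs_of_pos (by positivity)]
  calc (ς * √(2 * π))⁻¹ * (ς⁻¹ ^ n * |iteratedDeriv n (fun y => exp (-(y ^ 2 / 2))) _|)
      ≤ (ς * √(2 * π))⁻¹ * (ς⁻¹ ^ n * C) := by gcongr; exact hbound _
    _ = C / √(2 * π) / ς ^ (n + 1) := by rw [inv_pow]; field_simp; ring
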